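/- arXiv:1201.0250 — 6 statements merged into one kernel-verified Lean document; each statement's English description precedes it below -/
import Mathlib

section
/- Let a,b,c,t be complex numbers and define 𝐚(t) = (1/3)[e^{t(a+b+c)} + e^{t(a+bω+cω²)} + e^{t(a+bω²+cω)}], 𝐛(t) = (1/3)[e^{t(a+b+c)} + ω²e^{t(a+bω+cω²)} + ω e^{t(a+bω²+cω)}], 𝐜(t) = (1/3)[e^{t(a+b+c)} + ω e^{t(a+bω+cω²)} + ω² e^{t(a+bω²+cω)}], with ω a primitive cube root of unity. Then exp(t·D(a,b,c)) = D(𝐚(t), 𝐛(t), 𝐜(t)). -/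
open Matrix

/-- The 3×3 circulant matrix with rows (a,b,c), (c,a,b), (b,c,a). -/
def Dm (a b c : ℂ) : Matrix (Fin 3) (Fin 3) ℂ := !![a, b, c; c, a, b; b, c, a]

/-- A primitive cube root of unity. -/
noncomputable def ω : ℂ := Complex.exp (2 * Real.pi * Complex.I / 3)

noncomputable def af (a b c t : ℂ) : ℂ :=
  (1 / 3) * (Complex.exp (t * (a + b + c)) + Complex.exp (t * (a + b * ω + c * ω ^ 2))
    + Complex.exp (t * (a + b * ω ^ 2 + c * ω)))

noncomputable def bf (a b c t : ℂ) : ℂ :=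
  (1 / 3) * (Complex.exp (t * (a + b + c)) + ω ^ 2 * Complex.exp (t * (a + b * ω + c * ω ^ 2))
    + ω * Complex.exp (t * (a + b * ω ^ 2 + c * ω)))

noncomputable def cf (a b c t : ℂ) : ℂ :=
  (1 / 3) * (Complex.exp (t * (a + b + c)) + ω * Complex.exp (t * (a + b * ω + c * ω ^ 2))
    + ω ^ 2 * Complex.exp (t * (a + b * ω ^ 2 + c * ω)))

/-!
The Fourier matrix `dft` diagonalises every 3×3 circulant: `t • D(a,b,c)` is conjugate to
`diag(tλ₀, tλ₁, tλ₂)` with `λₖ = a + bωᵏ + cω²ᵏ`. The exponential commutes with conjugation and acts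
entrywise on diagonal matrices, and conjugating `diag(x, y, z)` back gives the circulant whose
entries are the inverse Fourier transform of `(x, y, z)`; at `(e^{tλ₀}, e^{tλ₁}, e^{tλ₂})` these
are `𝐚(t), 𝐛(t), 𝐜(t)`.
-/

theorem isPrimitiveRoot_ω : IsPrimitiveRoot ω 3 := by
  simpa [ω] using Complex.isPrimitiveRoot_exp 3 (by norm_num)

theorem ω_pow_three : ω ^ 3 = 1 := isPrimitiveRoot_ω.pow_eq_one

theorem one_add_ω_add_ω_sq : 1 + ω + ω ^ 2 = 0 := by
  simpa [Finset.sum_range_succ] using isPrimitiveRoot_ω.geom_sum_eq_zero (by norm_num)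

noncomputable def dft : Matrix (Fin 3) (Fin 3) ℂ := !![1, 1, 1; 1, ω, ω ^ 2; 1, ω ^ 2, ω]

noncomputable def idft : Matrix (Fin 3) (Fin 3) ℂ :=
  (1 / 3 : ℂ) • !![1, 1, 1; 1, ω ^ 2, ω; 1, ω, ω ^ 2]

theorem dft_mul_idft : dft * idft = 1 := by
  have h₃ := ω_pow_three
  have h₀ := one_add_ω_add_ω_sq
  ext i j
  fin_cases i <;> fin_cases j <;> simp [dft, idft, mul_apply, Fin.sum_univ_three, one_apply] <;>
    grind

theorem idft_mul_dft : idft * dft = 1 := mul_eq_one_comm.mp dft_mul_idft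

theorem dft_mul_diagonal_mul_idft (x y z : ℂ) :
    dft * diagonal ![x, y, z] * idft =
      Dm (1 / 3 * (x + y + z)) (1 / 3 * (x + ω ^ 2 * y + ω * z))
        (1 / 3 * (x + ω * y + ω ^ 2 * z)) := by
  have h₃ := ω_pow_three
  ext i j
  fin_cases i <;> fin_cases j <;>
    simp [dft, idft, Dm, mul_apply, Fin.sum_univ_three, vecMul_diagonal] <;> grind

theorem smul_Dm_eq_dft_mul_diagonal_mul_idft (t a b c : ℂ) :
    t • Dm a b c = dft * diagonal
      ![t * (a + b + c), t * (a + b * ω + c * ω ^ 2), t * (a + b * ω ^ 2 + c * ω)] * idft := by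
  have h₃ := ω_pow_three
  have h₀ := one_add_ω_add_ω_sq
  rw [dft_mul_diagonal_mul_idft]
  ext i j
  fin_cases i <;> fin_cases j <;> simp [Dm] <;> grind

theorem exp_diagonal_vec3 (x y z : ℂ) :
    NormedSpace.exp (diagonal ![x, y, z]) =
      diagonal ![Complex.exp x, Complex.exp y, Complex.exp z] := by
  rw [Matrix.exp_diagonal, Pi.exp_def, Complex.exp_eq_exp_ℂ]
  congr 1
  ext i
  fin_cases i <;> rfl

theorem exp_circulant_is_circulant (a b c t : ℂ) :
    NormedSpace.exp (t • Dm a b c) = Dm (af a b c t) (bf a b c t) (cf a b c t) := by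
  rw [smul_Dm_eq_dft_mul_diagonal_mul_idft]
  refine (Matrix.exp_units_conj ⟨dft, idft, dft_mul_idft, idft_mul_dft⟩ _).trans ?_
  rw [exp_diagonal_vec3]
  exact dft_mul_diagonal_mul_idft _ _ _
end

section
/- Let a,b,c ∈ ℝ, set u = (b+c)/2 and v = (b−c)/2. Then for every real t: 𝐚(t) = (1/3)e^{t(a−u)}[e^{3tu} + 2cos(√3·v·t)], 𝐛(t) = (1/3)e^{t(a−u)}[e^{3tu} + 2cos(√3·v·t − 2π/3)], and 𝐜(t) = (1/3)e^{t(a−u)}[e^{3tu} + 2cos(√3·v·t + 2π/3)]. In particular 𝐚(t), 𝐛(t), 𝐜(t) are real for all real t. -/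
lemma expI (x : ℝ) : Complex.exp (↑x * Complex.I) =
    ↑(Real.cos x) + ↑(Real.sin x) * Complex.I := by
  rw [Complex.exp_mul_I]; push_cast; ring

theorem real_form (a b c : ℝ) (u v : ℝ) (hu : u = (b + c) / 2) (hv : v = (b - c) / 2)
    (t : ℝ) :
    af a b c t = ((1 / 3) * Real.exp (t * (a - u)) *
        (Real.exp (3 * t * u) + 2 * Real.cos (Real.sqrt 3 * v * t)) : ℝ) ∧
    bf a b c t = ((1 / 3) * Real.exp (t * (a - u)) *
        (Real.exp (3 * t * u) + 2 * Real.cos (Real.sqrt 3 * v * t - 2 * Real.pi / 3)) : ℝ) ∧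
    cf a b c t = ((1 / 3) * Real.exp (t * (a - u)) *
        (Real.exp (3 * t * u) + 2 * Real.cos (Real.sqrt 3 * v * t + 2 * Real.pi / 3)) : ℝ) ∧
    (af a b c t).im = 0 ∧ (bf a b c t).im = 0 ∧ (cf a b c t).im = 0 := by
  set θ : ℝ := Real.sqrt 3 * v * t with hθ
  have h3c : ((Real.sqrt 3 : ℝ) : ℂ) ^ 2 = 3 := by
    rw [← Complex.ofReal_pow, Real.sq_sqrt (by norm_num : (0:ℝ) ≤ 3)]; norm_num
  have hωval : ω = (-1/2 : ℂ) + ((Real.sqrt 3 / 2 : ℝ) : ℂ) * Complex.I := by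
    rw [ω, show (2 * (Real.pi:ℂ) * Complex.I / 3) = ((2*Real.pi/3 : ℝ):ℂ) * Complex.I by
      push_cast; ring, Complex.exp_mul_I, ← Complex.ofReal_cos, ← Complex.ofReal_sin,
      show (2*Real.pi/3) = Real.pi - Real.pi/3 by ring,
      Real.cos_pi_sub, Real.sin_pi_sub, Real.cos_pi_div_three, Real.sin_pi_div_three]
    push_cast; ring
  have hω2 : ω ^ 2 = (-1/2 : ℂ) - ((Real.sqrt 3 / 2 : ℝ) : ℂ) * Complex.I := by
    rw [hωval]
    push_cast
    linear_combination (Complex.I^2/4) * h3c + (3/4) * Complex.I_sq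
  have hE0 : Complex.exp (↑t * (↑a + ↑b + ↑c)) =
      ↑(Real.exp (t*(a-u))) * ↑(Real.exp (3*t*u)) := by
    rw [show ((t:ℂ) * (↑a + ↑b + ↑c)) = ↑(t*(a-u)) + ↑(3*t*u) by
      subst hu; push_cast; ring, Complex.exp_add]
    norm_cast
  have hE1 : Complex.exp (↑t * (↑a + ↑b * ω + ↑c * ω ^ 2)) =
      ↑(Real.exp (t*(a-u))) * Complex.exp (↑θ * Complex.I) := by
    rw [show ((t:ℂ) * (↑a + ↑b * ω + ↑c * ω ^ 2)) = ↑(t*(a-u)) + ↑θ * Complex.I by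
      rw [hω2, hωval]; subst hu hv; simp only [hθ]; push_cast; ring, Complex.exp_add]
    norm_cast
  have hE2 : Complex.exp (↑t * (↑a + ↑b * ω ^ 2 + ↑c * ω)) =
      ↑(Real.exp (t*(a-u))) * Complex.exp (↑(-θ) * Complex.I) := by
    rw [show ((t:ℂ) * (↑a + ↑b * ω ^ 2 + ↑c * ω)) = ↑(t*(a-u)) + ↑(-θ) * Complex.I by
      rw [hω2, hωval]; subst hu hv; simp only [hθ]; push_cast; ring, Complex.exp_add]
    norm_cast
  have mul1 : ω ^ 2 * Complex.exp (↑θ * Complex.I) =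
      Complex.exp (↑(θ - 2*Real.pi/3) * Complex.I) := by
    have : ω ^ 2 * Complex.exp (↑θ * Complex.I) =
        Complex.exp (↑(θ - 2*Real.pi/3) * Complex.I) * Complex.exp (2*↑Real.pi*Complex.I) := by
      rw [ω, sq, ← Complex.exp_add, ← Complex.exp_add, ← Complex.exp_add]
      congr 1; push_cast; ring
    rw [this, Complex.exp_two_pi_mul_I, mul_one]
  have mul2 : ω * Complex.exp (↑(-θ) * Complex.I) =
      Complex.exp (↑(-(θ - 2*Real.pi/3)) * Complex.I) := by
    rw [ω, ← Complex.exp_add]; congr 1; push_cast; ring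
  have mul3 : ω * Complex.exp (↑θ * Complex.I) =
      Complex.exp (↑(θ + 2*Real.pi/3) * Complex.I) := by
    rw [ω, ← Complex.exp_add]; congr 1; push_cast; ring
  have mul4 : ω ^ 2 * Complex.exp (↑(-θ) * Complex.I) =
      Complex.exp (↑(-(θ + 2*Real.pi/3)) * Complex.I) := by
    have : ω ^ 2 * Complex.exp (↑(-θ) * Complex.I) =
        Complex.exp (↑(-(θ + 2*Real.pi/3)) * Complex.I) * Complex.exp (2*↑Real.pi*Complex.I) := by
      rw [ω, sq, ← Complex.exp_add, ← Complex.exp_add, ← Complex.exp_add]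
      congr 1; push_cast; ring
    rw [this, Complex.exp_two_pi_mul_I, mul_one]
  have ha : af a b c t = ((1 / 3) * Real.exp (t * (a - u)) *
      (Real.exp (3 * t * u) + 2 * Real.cos θ) : ℝ) := by
    rw [af, hE0, hE1, hE2, expI θ, expI (-θ)]
    push_cast [Real.cos_neg, Real.sin_neg]; ring
  have hb : bf a b c t = ((1 / 3) * Real.exp (t * (a - u)) *
      (Real.exp (3 * t * u) + 2 * Real.cos (θ - 2 * Real.pi / 3)) : ℝ) := by
    rw [bf, hE0, hE1, hE2, mul_left_comm (ω^2), mul1, mul_left_comm ω, mul2,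
      expI (θ - 2*Real.pi/3), expI (-(θ - 2*Real.pi/3))]
    push_cast [Real.cos_neg, Real.sin_neg]; ring
  have hc : cf a b c t = ((1 / 3) * Real.exp (t * (a - u)) *
      (Real.exp (3 * t * u) + 2 * Real.cos (θ + 2 * Real.pi / 3)) : ℝ) := by
    rw [cf, hE0, hE1, hE2, mul_left_comm ω, mul3, mul_left_comm (ω^2), mul4,
      expI (θ + 2*Real.pi/3), expI (-(θ + 2*Real.pi/3))]
    push_cast [Real.cos_neg, Real.sin_neg]; ring
  refine ⟨ha, hb, hc, ?_, ?_, ?_⟩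
  · rw [ha]; exact Complex.ofReal_im _
  · rw [hb]; exact Complex.ofReal_im _
  · rw [hc]; exact Complex.ofReal_im _
end

section
/- Let u, v ∈ ℝ with u > 0 and u ≥ |v|, and let α ∈ {0, 2π/3, −2π/3}. Define f_α(t) = e^{3ut} + 2cos(√3·v·t + α). Then f_α is strictly increasing on [0, ∞), and f_α(t) > 0 for all t > 0. -/
theorem f_alpha_strictMono_pos (u v α : ℝ) (hu : 0 < u) (huv : |v| ≤ u)
    (hα : α = 0 ∨ α = 2 * Real.pi / 3 ∨ α = -(2 * Real.pi) / 3) :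
    StrictMonoOn (fun t : ℝ => Real.exp (3 * u * t) + 2 * Real.cos (Real.sqrt 3 * v * t + α))
      (Set.Ici 0) ∧
    ∀ t : ℝ, 0 < t →
      0 < Real.exp (3 * u * t) + 2 * Real.cos (Real.sqrt 3 * v * t + α) := by
  have hderiv : ∀ t : ℝ, HasDerivAt
      (fun t : ℝ => Real.exp (3 * u * t) + 2 * Real.cos (Real.sqrt 3 * v * t + α))
      (Real.exp (3 * u * t) * (3 * u) +
        2 * (-Real.sin (Real.sqrt 3 * v * t + α) * (Real.sqrt 3 * v))) t := by
    intro t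
    have h1 : HasDerivAt (fun t : ℝ => 3 * u * t) (3 * u) t := by
      simpa using (hasDerivAt_id t).const_mul (3 * u)
    have h2 : HasDerivAt (fun t : ℝ => Real.sqrt 3 * v * t + α) (Real.sqrt 3 * v) t := by
      simpa using ((hasDerivAt_id t).const_mul (Real.sqrt 3 * v)).add_const α
    exact (h1.exp).add ((h2.cos).const_mul 2)
  have hs3' : (0:ℝ) ≤ Real.sqrt 3 := Real.sqrt_nonneg 3
  have hs3 : Real.sqrt 3 * Real.sqrt 3 = 3 := Real.mul_self_sqrt (by norm_num)
  have hc23 : Real.cos (2 * Real.pi / 3) = -(1/2) := by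
    rw [show (2 * Real.pi / 3 : ℝ) = Real.pi - Real.pi / 3 by ring, Real.cos_pi_sub,
      Real.cos_pi_div_three]
  have hsn23 : Real.sin (2 * Real.pi / 3) = Real.sqrt 3 / 2 := by
    rw [show (2 * Real.pi / 3 : ℝ) = Real.pi - Real.pi / 3 by ring, Real.sin_pi_sub,
      Real.sin_pi_div_three]
  have hc23' : Real.cos (-(2 * Real.pi) / 3) = -(1/2) := by
    rw [show (-(2 * Real.pi) / 3 : ℝ) = -(2 * Real.pi / 3) by ring, Real.cos_neg, hc23]
  have hsn23' : Real.sin (-(2 * Real.pi) / 3) = -(Real.sqrt 3 / 2) := by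
    rw [show (-(2 * Real.pi) / 3 : ℝ) = -(2 * Real.pi / 3) by ring, Real.sin_neg, hsn23]
  have hpos : ∀ t : ℝ, 0 < t →
      0 < Real.exp (3 * u * t) * (3 * u) +
        2 * (-Real.sin (Real.sqrt 3 * v * t + α) * (Real.sqrt 3 * v)) := by
    intro t ht
    have hexp : 3 * u * t + 1 ≤ Real.exp (3 * u * t) := Real.add_one_le_exp _
    have hv2 : v ^ 2 ≤ u ^ 2 := by nlinarith [sq_abs v, abs_nonneg v]
    have hsin : |Real.sin (Real.sqrt 3 * v * t) * v| ≤ Real.sqrt 3 * v ^ 2 * t := by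
      calc |Real.sin (Real.sqrt 3 * v * t) * v|
          = |Real.sin (Real.sqrt 3 * v * t)| * |v| := abs_mul _ _
        _ ≤ |Real.sqrt 3 * v * t| * |v| :=
            mul_le_mul_of_nonneg_right Real.abs_sin_le_abs (abs_nonneg v)
        _ = Real.sqrt 3 * v ^ 2 * t := by
            rw [abs_mul, abs_mul, abs_of_nonneg hs3', abs_of_nonneg ht.le]
            rw [show Real.sqrt 3 * |v| * t * |v| = Real.sqrt 3 * (|v| * |v|) * t by ring,
              abs_mul_abs_self, sq]
    have hcos : |Real.cos (Real.sqrt 3 * v * t) * v| ≤ u := by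
      calc |Real.cos (Real.sqrt 3 * v * t) * v|
          = |Real.cos (Real.sqrt 3 * v * t)| * |v| := abs_mul _ _
        _ ≤ 1 * |v| := by gcongr; exact Real.abs_cos_le_one _
        _ ≤ u := by simpa using huv
    have hsl := (abs_le.mp hsin).1
    have hsr := (abs_le.mp hsin).2
    have hcl := (abs_le.mp hcos).1
    have hcr := (abs_le.mp hcos).2
    have hE : (3 * u * t + 1) * (3 * u) ≤ Real.exp (3 * u * t) * (3 * u) :=
      mul_le_mul_of_nonneg_right hexp (by positivity)
    have hvt : v ^ 2 * t ≤ u ^ 2 * t := mul_le_mul_of_nonneg_right hv2 ht.le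
    have h6u : Real.sqrt 3 * (Real.sin (Real.sqrt 3 * v * t) * v) ≤ 3 * (v ^ 2 * t) := by
      have := mul_le_mul_of_nonneg_left hsr hs3'
      calc Real.sqrt 3 * (Real.sin (Real.sqrt 3 * v * t) * v)
          ≤ Real.sqrt 3 * (Real.sqrt 3 * v ^ 2 * t) := this
        _ = Real.sqrt 3 * Real.sqrt 3 * (v ^ 2 * t) := by ring
        _ = 3 * (v ^ 2 * t) := by rw [hs3]
    have h6l : -(3 * (v ^ 2 * t)) ≤ Real.sqrt 3 * (Real.sin (Real.sqrt 3 * v * t) * v) := by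
      have := mul_le_mul_of_nonneg_left hsl hs3'
      calc -(3 * (v ^ 2 * t)) = Real.sqrt 3 * Real.sqrt 3 * -(v ^ 2 * t) := by
            rw [hs3]; ring
        _ = Real.sqrt 3 * -(Real.sqrt 3 * v ^ 2 * t) := by ring
        _ ≤ _ := this
    have he : Real.sqrt 3 * Real.sqrt 3 * (Real.cos (Real.sqrt 3 * v * t) * v) =
        3 * (Real.cos (Real.sqrt 3 * v * t) * v) := by rw [hs3]
    have hu2t : 0 < u ^ 2 * t := by positivity
    rcases hα with rfl | rfl | rfl
    · rw [add_zero]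
      linarith [hE, hvt, h6u, hu2t, hu]
    · rw [Real.sin_add, hc23, hsn23]
      linarith [hE, hvt, h6l, he, hcr, hcl, hu2t, hu]
    · rw [Real.sin_add, hc23', hsn23']
      linarith [hE, hvt, h6l, he, hcr, hcl, hu2t, hu]
  have hmono : StrictMonoOn
      (fun t : ℝ => Real.exp (3 * u * t) + 2 * Real.cos (Real.sqrt 3 * v * t + α))
      (Set.Ici 0) := by
    apply StrictMonoOn.mono (s := Set.Ici (0:ℝ)) ?_ le_rfl
    apply strictMonoOn_of_deriv_pos (convex_Ici 0)
    · exact fun t _ => (hderiv t).continuousAt.continuousWithinAt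
    · intro x hx
      rw [(hderiv x).deriv]
      rw [interior_Ici] at hx
      exact hpos x hx
  refine ⟨hmono, fun t ht => ?_⟩
  have h0 : (0:ℝ) ∈ Set.Ici (0:ℝ) := Set.self_mem_Ici
  have := hmono h0 (Set.mem_Ici.mpr ht.le) ht
  have hf0 : 0 ≤ Real.exp (3 * u * 0) + 2 * Real.cos (Real.sqrt 3 * v * 0 + α) := by
    rw [mul_zero, mul_zero, Real.exp_zero, zero_add]
    rcases hα with rfl | rfl | rfl
    · rw [Real.cos_zero]; norm_num
    · rw [hc23]; norm_num
    · rw [hc23']; norm_num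
  simp only at this
  linarith
end

section
/- Let n ∈ ℕ and let [A_{jk}] (1 ≤ j,k ≤ n) be a positive semidefinite block matrix with each block A_{jk} ∈ M_m(ℂ). Suppose there exists a unitary matrix U ∈ M_m(ℂ) such that A_{jk} = U·A_{jk}ᵗ·U* for all j,k (i.e., the blocks are collectively unitarily equivalent to their transposes). Then the partial transpose [A_{jk}ᵗ] is also positive semidefinite. -/
open Matrix
open scoped ComplexOrder

theorem partial_transpose_posSemidef_of_CUET (n m : ℕ)
    (A : Fin n → Fin n → Matrix (Fin m) (Fin m) ℂ)
    (hpos : Matrix.PosSemidef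
      (Matrix.of fun (jp : Fin n × Fin m) (kq : Fin n × Fin m) => A jp.1 kq.1 jp.2 kq.2))
    (U : Matrix (Fin m) (Fin m) ℂ) (hU : U ∈ Matrix.unitaryGroup (Fin m) ℂ)
    (hCUET : ∀ j k, A j k = U * (A j k)ᵀ * Uᴴ) :
    Matrix.PosSemidef
      (Matrix.of fun (jp : Fin n × Fin m) (kq : Fin n × Fin m) => (A jp.1 kq.1)ᵀ jp.2 kq.2) := by
  have hUu : Uᴴ * U = 1 := by
    have := hU.1
    rwa [star_eq_conjTranspose] at this
  have hA : ∀ j k, Uᴴ * A j k * U = (A j k)ᵀ := by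
    intro j k
    nth_rewrite 1 [hCUET j k]
    calc Uᴴ * (U * (A j k)ᵀ * Uᴴ) * U
        = (Uᴴ * U) * (A j k)ᵀ * (Uᴴ * U) := by
          simp only [Matrix.mul_assoc]
      _ = (A j k)ᵀ := by rw [hUu]; simp
  set M : Matrix (Fin n × Fin m) (Fin n × Fin m) ℂ :=
    Matrix.of fun jp kq => if jp.1 = kq.1 then Uᴴ jp.2 kq.2 else 0 with hM
  have key : (Matrix.of fun (jp : Fin n × Fin m) (kq : Fin n × Fin m) => (A jp.1 kq.1)ᵀ jp.2 kq.2)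
      = M * (Matrix.of fun (jp : Fin n × Fin m) (kq : Fin n × Fin m) => A jp.1 kq.1 jp.2 kq.2) * Mᴴ := by
    ext ⟨j, p⟩ ⟨k, q⟩
    have := congrArg (fun B => B p q) (hA j k)
    simp only [mul_apply] at this
    simp only [Matrix.mul_apply, hM, Matrix.of_apply, conjTranspose_apply,
      Fintype.sum_prod_type, apply_ite star, star_zero, ite_mul, mul_ite, zero_mul, mul_zero,
      Finset.sum_ite_irrel, Finset.sum_const_zero,
      Finset.sum_ite_eq, Finset.sum_ite_eq', Finset.mem_univ, if_true]
    rw [← this]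
    simp [conjTranspose_apply, star_star]
  rw [key]
  exact hpos.mul_mul_conjTranspose_same M
end

section
/- Let H be a Hilbert space and X a family of bounded operators on H closed under taking adjoints, and let φ : X → B(H) be an idempotent linear *-map (φ∘φ = φ, φ(x*) = φ(x)*). Suppose φ is co-Schwarz, i.e., τ∘φ satisfies the Schwarz inequality τφ(x*x) ≥ τφ(x*)·τφ(x) whenever applicable, where τ is the transpose with respect to a fixed orthonormal basis. Then every y in the range of φ such that both y*y and yy* lie in the range of φ is normal, i.e., y*y = yy*. -/
open ContinuousLinearMap

/-- Proposition 5.4: if an idempotent ∗-map on a star-closed family of bounded operators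
is co-Schwarz (with respect to an injective antimultiplicative "transpose" map τ),
then every element of its range whose products y*y and yy* also lie in the range is normal. -/
theorem range_of_coSchwarz_idempotent_is_normal
    {H : Type*} [NormedAddCommGroup H] [InnerProductSpace ℂ H] [CompleteSpace H]
    (X : Set (H →L[ℂ] H)) (hXstar : ∀ x ∈ X, star x ∈ X)
    (φ : (H →L[ℂ] H) →ₗ[ℂ] (H →L[ℂ] H))
    (hidem : ∀ x, φ (φ x) = φ x)
    (hstar : ∀ x, φ (star x) = star (φ x))
    (τ : (H →L[ℂ] H) →ₗ[ℂ] (H →L[ℂ] H))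
    (hτ_anti : ∀ x y : H →L[ℂ] H, τ (x * y) = τ y * τ x)
    (hτ_inj : Function.Injective τ)
    (hcoSchwarz : ∀ x : H →L[ℂ] H,
      (τ (φ (star x * x)) - τ (φ (star x)) * τ (φ x)).IsPositive)
    (y : H →L[ℂ] H) (hy : y ∈ φ '' X)
    (hy1 : star y * y ∈ φ '' X) (hy2 : y * star y ∈ φ '' X) :
    star y * y = y * star y := by
  -- φ fixes its range
  have hfix : ∀ z ∈ φ '' X, φ z = z := by
    rintro z ⟨x, -, rfl⟩; exact hidem x
  have hφy : φ y = y := hfix y hy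
  have hφys : φ (star y) = star y := by rw [hstar, hφy]
  have hφ1 : φ (star y * y) = star y * y := hfix _ hy1
  have hφ2 : φ (y * star y) = y * star y := hfix _ hy2
  have h1 := hcoSchwarz y
  rw [hφ1, hφys, hφy, ← hτ_anti] at h1
  have h2 := hcoSchwarz (star y)
  rw [star_star, hφ2, hφy, hφys, ← hτ_anti] at h2
  -- h1 : (τ (star y * y) - τ (y * star y)).IsPositive
  -- h2 : (τ (y * star y) - τ (star y * y)).IsPositive
  have : τ (star y * y) = τ (y * star y) :=
    le_antisymm (ContinuousLinearMap.le_def _ _ |>.mpr h2)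
      (ContinuousLinearMap.le_def _ _ |>.mpr h1)
  exact hτ_inj this
end

section
/- The 9×9 Choi matrix C of the map ρ[a,b,c,d] = D(a,b,c) ⊕ d·I_{F₃} on M₃(ℂ), with a,b,c real nonzero and d real, has rank 7 if a = d, rank 8 if a = −2d, and rank 9 if a ≠ d and a ≠ −2d. -/
open Matrix

/-- Diagonal of ρ[a,b,c,d](E_jj): row j of the circulant with rows (a,c,b),(b,a,c),(c,b,a). -/
def diagPart (a b c : ℝ) : Matrix (Fin 3) (Fin 3) ℂ :=
  !![(a : ℂ), (c : ℂ), (b : ℂ); (b : ℂ), (a : ℂ), (c : ℂ); (c : ℂ), (b : ℂ), (a : ℂ)]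

/-- The Choi matrix of the map ρ[a,b,c,d] = D(a,b,c) ⊕ d·I_{F₃} on M₃(ℂ):
its ((j,p),(k,q)) entry is the (p,q) entry of ρ[a,b,c,d](E_{jk}). -/
def ChoiRho (a b c d : ℝ) : Matrix (Fin 3 × Fin 3) (Fin 3 × Fin 3) ℂ :=
  Matrix.of fun jp kq =>
    if jp.1 = kq.1 then (if jp.2 = kq.2 then diagPart a b c jp.1 jp.2 else 0)
    else (if jp.2 = jp.1 ∧ kq.2 = kq.1 then (d : ℂ) else 0)

/-- 3×3 eigenvector matrix for (a-d)I + dJ. -/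
def P3 : Matrix (Fin 3) (Fin 3) ℂ := !![1,1,1;1,-1,0;1,0,-1]

/-- Inverse of `P3`. -/
noncomputable def Q3 : Matrix (Fin 3) (Fin 3) ℂ := !![1/3,1/3,1/3;1/3,-2/3,1/3;1/3,1/3,-2/3]

/-- Full 9×9 change of basis. -/
def Pmat : Matrix (Fin 3 × Fin 3) (Fin 3 × Fin 3) ℂ :=
  Matrix.of fun jp kq =>
    if jp.2 = jp.1 ∧ kq.2 = kq.1 then P3 jp.1 kq.1
    else if jp = kq then 1 else 0

noncomputable def Qmat : Matrix (Fin 3 × Fin 3) (Fin 3 × Fin 3) ℂ :=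
  Matrix.of fun jp kq =>
    if jp.2 = jp.1 ∧ kq.2 = kq.1 then Q3 jp.1 kq.1
    else if jp = kq then 1 else 0

/-- Diagonal of eigenvalues. -/
def wvec (a b c d : ℝ) : Fin 3 × Fin 3 → ℂ := fun jp =>
  if jp.2 = jp.1 then (if jp.1 = 0 then (a : ℂ) + 2*d else (a : ℂ) - d)
  else diagPart a b c jp.1 jp.2

set_option maxHeartbeats 2000000 in
lemma PQ : Pmat * Qmat = 1 := by
  ext ⟨j, p⟩ ⟨k, q⟩
  fin_cases j <;> fin_cases p <;> fin_cases k <;> fin_cases q <;>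
    simp [Pmat, Qmat, P3, Q3, Matrix.mul_apply, Fintype.sum_prod_type,
      Fin.sum_univ_succ, Matrix.one_apply, Prod.ext_iff] <;> norm_num

set_option maxHeartbeats 2000000 in
lemma MP_eq (a b c d : ℝ) :
    ChoiRho a b c d * Pmat = Pmat * Matrix.diagonal (wvec a b c d) := by
  ext ⟨j, p⟩ ⟨k, q⟩
  fin_cases j <;> fin_cases p <;> fin_cases k <;> fin_cases q <;>
    simp [ChoiRho, Pmat, P3, wvec, diagPart, Matrix.mul_apply, Fintype.sum_prod_type,
      Fin.sum_univ_succ, Matrix.diagonal, Prod.ext_iff] <;> ring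

lemma rank_eq_card (a b c d : ℝ) :
    (ChoiRho a b c d).rank = Fintype.card {i // wvec a b c d i ≠ 0} := by
  have hP : IsUnit Pmat.det := Matrix.isUnit_det_of_right_inverse PQ
  have hQ : IsUnit Qmat.det :=
    Matrix.isUnit_det_of_right_inverse (mul_eq_one_comm.mp PQ)
  have hM : ChoiRho a b c d = Pmat * Matrix.diagonal (wvec a b c d) * Qmat := by
    calc ChoiRho a b c d = ChoiRho a b c d * (Pmat * Qmat) := by rw [PQ, Matrix.mul_one]
    _ = (ChoiRho a b c d * Pmat) * Qmat := by rw [Matrix.mul_assoc]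
    _ = _ := by rw [MP_eq]
  rw [hM, Matrix.rank_mul_eq_left_of_isUnit_det _ _ hQ,
    Matrix.rank_mul_eq_right_of_isUnit_det _ _ hP, Matrix.rank_diagonal]

lemma card_support (a b c d : ℝ) (S : Finset (Fin 3 × Fin 3))
    (hS : ∀ i, i ∈ S ↔ wvec a b c d i ≠ 0) :
    Fintype.card {i // wvec a b c d i ≠ 0} = S.card := by
  rw [Fintype.card_subtype]
  congr 1
  ext i
  simp [hS]

theorem choi_rank (a b c d : ℝ) (ha : a ≠ 0) (hb : b ≠ 0) (hc : c ≠ 0) :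
    (a = d → (ChoiRho a b c d).rank = 7) ∧
    (a = -2 * d → (ChoiRho a b c d).rank = 8) ∧
    (a ≠ d → a ≠ -2 * d → (ChoiRho a b c d).rank = 9) := by
  have hb' : (b : ℂ) ≠ 0 := by exact_mod_cast hb
  have hc' : (c : ℂ) ≠ 0 := by exact_mod_cast hc
  have ha' : (a : ℂ) ≠ 0 := by exact_mod_cast ha
  refine ⟨?_, ?_, ?_⟩
  · intro had
    subst had
    rw [rank_eq_card, card_support a b c a
      (({((0:Fin 3),(0:Fin 3))} : Finset (Fin 3 × Fin 3)) ∪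
        (Finset.univ.filter (fun i : Fin 3 × Fin 3 => i.2 ≠ i.1))) ?_]
    · decide
    · intro ⟨j, p⟩
      have h3 : (a : ℂ) + 2*a ≠ 0 := by
        intro h; apply ha'; linear_combination h / 3
      fin_cases j <;> fin_cases p <;>
        simp [wvec, diagPart, h3, hb', hc']
  · intro had
    have hd : d = -a/2 := by linarith
    subst hd
    rw [rank_eq_card, card_support a b c (-a/2)
      ((Finset.univ.filter (fun i : Fin 3 × Fin 3 => i.2 ≠ i.1)) ∪
        {((1:Fin 3),(1:Fin 3)), ((2:Fin 3),(2:Fin 3))}) ?_]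
    · decide
    · intro ⟨j, p⟩
      have h0 : (a : ℂ) + 2*(-(a : ℂ)/2) = 0 := by ring
      have h1 : ¬ ((a : ℂ) - -(a : ℂ)/2 = 0) := by
        intro h; apply ha'; linear_combination h * 2 / 3
      fin_cases j <;> fin_cases p <;>
        simp [wvec, diagPart, h0, h1, hb', hc', Prod.ext_iff]
  · intro h1 h2
    rw [rank_eq_card, card_support a b c d (Finset.univ) ?_]
    · decide
    · intro ⟨j, p⟩
      have e1 : (a : ℂ) - d ≠ 0 := by
        intro h; apply h1
        have : (a : ℂ) = d := by linear_combination h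
        exact_mod_cast this
      have e2 : (a : ℂ) + 2*d ≠ 0 := by
        intro h; apply h2
        have : (a : ℂ) = -2*d := by linear_combination h
        exact_mod_cast this
      fin_cases j <;> fin_cases p <;>
        simp [wvec, diagPart, e1, e2, hb', hc']
end
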